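/- arXiv:math/0304313 — 2 statements merged into one kernel-verified Lean document; each statement's English description precedes it below -/
import Mathlib

section
/- Let R_1, R_2 be algebras with trace over k embedding trace-compatibly into M_{n_1}(A_1) and M_{n_2}(A_2) respectively. Then R_1 ⊗_k R_2 with trace t(r_1 ⊗ r_2) := t_1(r_1)·t_2(r_2) satisfies the (n_1·n_2)-th Cayley-Hamilton identity, via the Kronecker product embedding into M_{n_1 n_2}(A_1 ⊗_k A_2). -/
open scoped TensorProduct

/-- Universal polynomials expressing the (signed) elementary symmetric functions in terms
of the Newton power sums (convention `∏ (t - x_j) = t^n + ∑ e_i t^(n-i)`). -/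
def IsNewtonFamily (P : ℕ → MvPolynomial ℕ ℚ) : Prop :=
  (∀ i, (P i).vars ⊆ Finset.Icc 1 i) ∧
  ∀ (n i : ℕ), 1 ≤ i → i ≤ n → ∀ x : Fin n → ℚ,
    MvPolynomial.eval (fun k => ∑ j, x j ^ k) (P i) =
      (-1) ^ i *
        ∑ s ∈ Finset.powersetCard i (Finset.univ : Finset (Fin n)), ∏ j ∈ s, x j

section NewtonHelpers

open MvPolynomial

private lemma eval_aeval_nat {n : ℕ} (x : Fin n → ℚ) (g : ℕ → MvPolynomial (Fin n) ℚ)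
    (p : MvPolynomial ℕ ℚ) :
    MvPolynomial.eval x (MvPolynomial.aeval g p) =
      MvPolynomial.eval (fun j => MvPolynomial.eval x (g j)) p := by
  induction p using MvPolynomial.induction_on with
  | C a => simp
  | add p q hp hq => simp only [map_add, hp, hq]
  | mul_X p i hp => rw [map_mul, map_mul, hp]; simp

private lemma ringHom_aeval {B C : Type*} [CommRing B] [CommRing C] [Algebra ℚ B] [Algebra ℚ C]
    (ψ : B →+* C) (hψ : ∀ r : ℚ, ψ (algebraMap ℚ B r) = algebraMap ℚ C r)
    {σ : Type*} (g : σ → B) (p : MvPolynomial σ ℚ) :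
    ψ (MvPolynomial.aeval g p) = MvPolynomial.aeval (fun j => ψ (g j)) p := by
  let φ : B →ₐ[ℚ] C := { ψ with commutes' := hψ }
  exact MvPolynomial.comp_aeval_apply (f := g) φ p

end NewtonHelpers

section Newton2
open MvPolynomial Finset

private lemma newton_poly {P : ℕ → MvPolynomial ℕ ℚ} (hP : IsNewtonFamily P)
    {n i : ℕ} (h1 : 1 ≤ i) (h2 : i ≤ n) :
    MvPolynomial.aeval
        (fun k => ∑ j : Fin n, (MvPolynomial.X j : MvPolynomial (Fin n) ℚ) ^ k) (P i) =
      MvPolynomial.C ((-1 : ℚ) ^ i) *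
        ∑ s ∈ Finset.powersetCard i (Finset.univ : Finset (Fin n)), ∏ j ∈ s, MvPolynomial.X j := by
  apply MvPolynomial.funext
  intro x
  rw [eval_aeval_nat]
  have h := hP.2 n i h1 h2 x
  have hl : (fun j => MvPolynomial.eval x (∑ jj : Fin n, (MvPolynomial.X jj : MvPolynomial (Fin n) ℚ) ^ j)) = fun j => ∑ jj : Fin n, x jj ^ j := by
    funext j; simp
  rw [hl, h, map_mul, eval_C, map_sum]
  congr 1
  apply Finset.sum_congr rfl
  intro t _
  rw [map_prod]
  simp

private lemma newton_eval {P : ℕ → MvPolynomial ℕ ℚ} (hP : IsNewtonFamily P)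
    {B : Type*} [CommRing B] [Algebra ℚ B] {n i : ℕ} (h1 : 1 ≤ i) (h2 : i ≤ n) (x : Fin n → B) :
    MvPolynomial.aeval (fun k => ∑ j : Fin n, x j ^ k) (P i) =
      (-1 : B) ^ i * ∑ s ∈ Finset.powersetCard i (Finset.univ : Finset (Fin n)), ∏ j ∈ s, x j := by
  have h := congrArg (MvPolynomial.aeval x) (newton_poly hP h1 h2)
  rw [MvPolynomial.comp_aeval_apply (f := fun k => ∑ j : Fin n, (MvPolynomial.X j : MvPolynomial (Fin n) ℚ) ^ k)] at h
  have hl : (fun k => MvPolynomial.aeval x (∑ j : Fin n, (MvPolynomial.X j : MvPolynomial (Fin n) ℚ) ^ k)) = fun k => ∑ j : Fin n, x j ^ k := by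
    funext kk; simp
  rw [hl] at h
  rw [h, map_mul, MvPolynomial.aeval_C, map_sum]
  congr 1
  · rw [map_pow, map_neg, map_one]
  · apply Finset.sum_congr rfl
    intro t _
    rw [map_prod]
    simp

private lemma newton_eval_multiset {P : ℕ → MvPolynomial ℕ ℚ} (hP : IsNewtonFamily P)
    {B : Type*} [CommRing B] [Algebra ℚ B] {i : ℕ} (h1 : 1 ≤ i)
    (s : Multiset B) (h2 : i ≤ Multiset.card s) :
    MvPolynomial.aeval (fun k => (s.map (· ^ k)).sum) (P i) = (-1 : B) ^ i * s.esymm i := by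
  obtain ⟨l, rfl⟩ : ∃ l : List B, (l : Multiset B) = s := ⟨s.toList, s.coe_toList⟩
  have hlen : i ≤ l.length := by simpa using h2
  have hu : Multiset.map l.get (Finset.univ.val) = (l : Multiset B) := by
    rw [Fin.univ_def]
    show Multiset.map l.get (↑(List.finRange l.length)) = _
    rw [Multiset.map_coe, List.map_get_finRange]
  have h := newton_eval hP h1 hlen l.get
  have hl : (fun k => ((l : Multiset B).map (· ^ k)).sum) = fun k => ∑ j : Fin l.length, l.get j ^ k := by
    funext kk
    rw [← hu, Multiset.map_map]
    rfl
  rw [hl, h]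
  congr 1
  rw [← hu]
  rw [Finset.esymm_map_val]

end Newton2

section MatrixHelpers
open Matrix Polynomial

private lemma trace_matmap {n R S : Type*} [Fintype n] [NonAssocSemiring R] [NonAssocSemiring S]
    (f : R →+* S) (M : Matrix n n R) : Matrix.trace (M.map f) = f (Matrix.trace M) := by
  simp [Matrix.trace, Matrix.diag, map_sum]

private lemma trace_reindex' {m n R : Type*} [Fintype m] [Fintype n] [AddCommMonoid R]
    (e : m ≃ n) (M : Matrix m m R) : Matrix.trace (Matrix.reindex e e M) = Matrix.trace M := by
  simp only [Matrix.trace, Matrix.diag, Matrix.reindex_apply, Matrix.submatrix_apply]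
  exact Fintype.sum_equiv e.symm _ _ fun i => rfl

private lemma fromBlocks_pow {R m n : Type*} [CommRing R] [Fintype m] [Fintype n]
    [DecidableEq m] [DecidableEq n]
    (a : Matrix m m R) (bb : Matrix m n R) (d : Matrix n n R) (j : ℕ) :
    ∃ w, (Matrix.fromBlocks a bb 0 d) ^ j = Matrix.fromBlocks (a ^ j) w 0 (d ^ j) := by
  induction j with
  | zero => exact ⟨0, by simp [← Matrix.fromBlocks_one]⟩
  | succ j ih =>
    obtain ⟨w, hw⟩ := ih
    refine ⟨a ^ j * bb + w * d, ?_⟩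
    rw [pow_succ, hw, Matrix.fromBlocks_multiply]
    simp [pow_succ]

private lemma trace_fromBlocks' {R m n : Type*} [AddCommMonoid R] [Fintype m] [Fintype n]
    (a : Matrix m m R) (bb : Matrix m n R) (c : Matrix n m R) (d : Matrix n n R) :
    Matrix.trace (Matrix.fromBlocks a bb c d) = Matrix.trace a + Matrix.trace d := by
  simp [Matrix.trace, Matrix.diag, Fintype.sum_sum_type]

end MatrixHelpers

section TracePow
open Matrix Polynomial

private lemma toMatrix_pow {F : Type*} [CommRing F] {V : Type*} [AddCommGroup V] [Module F V]
    {ι : Type*} [Fintype ι] [DecidableEq ι] (b : Module.Basis ι F V) (f : V →ₗ[F] V) (j : ℕ) :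
    (LinearMap.toMatrix b b f) ^ j = LinearMap.toMatrix b b (f ^ j) := by
  induction j with
  | zero => simp [LinearMap.toMatrix_id]
  | succ j ih =>
    rw [pow_succ, pow_succ, ih, Module.End.mul_eq_comp, LinearMap.toMatrix_comp b b b]

private lemma trace_pow_eq {F : Type*} [Field F] [IsAlgClosed F] :
    ∀ (N : ℕ) (M : Matrix (Fin N) (Fin N) F) (j : ℕ),
      Matrix.trace (M ^ j) = ((M.charpoly.roots).map (· ^ j)).sum := by
  intro N
  induction N with
  | zero =>
    intro M j
    have h1 : M.charpoly = 1 :=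
      (M.charpoly_monic.natDegree_eq_zero).mp (by simp)
    rw [h1]
    simp [Matrix.trace]
  | succ N IH =>
    intro M j
    obtain ⟨lam, hlam⟩ := IsAlgClosed.exists_root M.charpoly (by
      rw [Polynomial.degree_eq_natDegree M.charpoly_monic.ne_zero]
      simp only [Matrix.charpoly_natDegree_eq_dim, Fintype.card_fin]
      exact_mod_cast Nat.succ_ne_zero N)
    have hchdef : M.charpoly = M.charmatrix.det := rfl
    have hdet : (lam • (1 : Matrix (Fin (N + 1)) (Fin (N + 1)) F) - M).det = 0 := by
      have hmap : (M.charmatrix).map (Polynomial.evalRingHom lam) =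
          lam • (1 : Matrix (Fin (N + 1)) (Fin (N + 1)) F) - M := by
        ext i jj
        by_cases hij : i = jj
        · subst hij
          simp [Matrix.charmatrix_apply_eq, Matrix.one_apply_eq]
        · simp [Matrix.charmatrix_apply_ne _ _ _ hij, Matrix.one_apply_ne hij]
      rw [← hmap, ← RingHom.mapMatrix_apply, ← RingHom.map_det]
      have : Polynomial.eval lam M.charpoly = 0 := hlam
      rw [hchdef] at this
      exact this
    obtain ⟨v, hv0, hv⟩ := (Matrix.exists_mulVec_eq_zero_iff).mpr hdet
    have hMv : M.mulVec v = lam • v := by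
      rw [Matrix.sub_mulVec, Matrix.smul_mulVec, Matrix.one_mulVec, sub_eq_zero] at hv
      exact hv.symm
    obtain ⟨q, hq⟩ := Submodule.exists_isCompl (Submodule.span F {v})
    have hdim : Module.finrank F q = N := by
      have h3 := Submodule.finrank_add_eq_of_isCompl hq
      rw [finrank_span_singleton hv0, Module.finrank_fin_fun] at h3
      omega
    let b₁ : Module.Basis (Fin 1) F (Submodule.span F {v}) :=
      Module.finBasisOfFinrankEq F _ (finrank_span_singleton hv0)
    let b₂ : Module.Basis (Fin N) F q := Module.finBasisOfFinrankEq F q hdim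
    let e := Submodule.prodEquivOfIsCompl _ q hq
    let b : Module.Basis (Fin 1 ⊕ Fin N) F (Fin (N + 1) → F) := (b₁.prod b₂).map e
    let f := Matrix.toLin' M
    have hb0 : (b (Sum.inl 0) : Fin (N + 1) → F) ∈ Submodule.span F {v} := by
      have hb : b (Sum.inl 0) = ↑(b₁ 0) + ↑(0 : q) := by
        simp only [b]
        rw [Module.Basis.map_apply, Module.Basis.prod_apply]
        simp only [Sum.elim_inl, Function.comp_apply, LinearMap.inl_apply]
        rw [Submodule.coe_prodEquivOfIsCompl']
      rw [hb, ZeroMemClass.coe_zero, add_zero]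
      exact Submodule.coe_mem _
    have hfb0 : f (b (Sum.inl 0)) = lam • b (Sum.inl 0) := by
      obtain ⟨c, hc⟩ := Submodule.mem_span_singleton.mp hb0
      have hfv : f v = lam • v := by
        rw [Matrix.toLin'_apply]
        exact hMv
      rw [← hc, _root_.map_smul, hfv, smul_comm]
    set A := LinearMap.toMatrix b b f with hA
    have hcol : ∀ i, A i (Sum.inl 0) = if i = Sum.inl 0 then lam else 0 := by
      intro i
      rw [hA, LinearMap.toMatrix_apply, hfb0, _root_.map_smul, b.repr_self]
      simp [Finsupp.single_apply, eq_comm]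
    have hch : M.charpoly = A.charpoly := by
      rw [hA, LinearMap.charpoly_toMatrix]
      conv_lhs => rw [← LinearMap.toMatrix'_toLin' M, ← LinearMap.toMatrix_eq_toMatrix',
        LinearMap.charpoly_toMatrix]
    have htr : ∀ jj : ℕ, Matrix.trace (M ^ jj) = Matrix.trace (A ^ jj) := by
      intro jj
      rw [hA, toMatrix_pow, ← LinearMap.trace_eq_matrix_trace F b (f ^ jj)]
      have h5 : M ^ jj = LinearMap.toMatrix (Pi.basisFun F (Fin (N + 1)))
          (Pi.basisFun F (Fin (N + 1))) (f ^ jj) := by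
        rw [← toMatrix_pow, LinearMap.toMatrix_eq_toMatrix', LinearMap.toMatrix'_toLin']
      rw [h5, ← LinearMap.trace_eq_matrix_trace F (Pi.basisFun F (Fin (N + 1))) (f ^ jj)]
    have h21 : A.toBlocks₂₁ = 0 := by
      ext i jj
      have hjj : jj = 0 := Subsingleton.elim _ _
      subst hjj
      have := hcol (Sum.inr i)
      simp only [Matrix.toBlocks₂₁, Matrix.of_apply]
      simpa using this
    have hblock : A = Matrix.fromBlocks A.toBlocks₁₁ A.toBlocks₁₂ 0 A.toBlocks₂₂ := by
      rw [← h21, Matrix.fromBlocks_toBlocks]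
    have ha : A.toBlocks₁₁ = lam • (1 : Matrix (Fin 1) (Fin 1) F) := by
      ext i jj
      have hi : i = 0 := Subsingleton.elim _ _
      have hjj : jj = 0 := Subsingleton.elim _ _
      subst hi; subst hjj
      simp only [Matrix.toBlocks₁₁, Matrix.of_apply, Matrix.smul_apply, Matrix.one_apply_eq,
        smul_eq_mul, mul_one]
      simpa using hcol (Sum.inl 0)
    obtain ⟨w', hw'⟩ := fromBlocks_pow A.toBlocks₁₁ A.toBlocks₁₂ A.toBlocks₂₂ j
    have hcha : (A.toBlocks₁₁).charpoly = Polynomial.X - Polynomial.C lam := by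
      rw [Matrix.charpoly_of_upperTriangular _ (by
        intro i jj hij
        exact absurd hij (by simp [Subsingleton.elim i jj]))]
      rw [ha]
      simp
    have hm : (Polynomial.X - Polynomial.C lam) * (A.toBlocks₂₂).charpoly ≠ 0 :=
      ((Polynomial.monic_X_sub_C lam).mul (A.toBlocks₂₂).charpoly_monic).ne_zero
    have htra : Matrix.trace ((A.toBlocks₁₁) ^ j) = lam ^ j := by
      rw [ha, _root_.smul_pow, one_pow, Matrix.trace_smul, Matrix.trace_one]
      simp
    calc Matrix.trace (M ^ j) = Matrix.trace (A ^ j) := htr j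
      _ = Matrix.trace ((A.toBlocks₁₁) ^ j) + Matrix.trace ((A.toBlocks₂₂) ^ j) := by
          conv_lhs => rw [hblock, hw', trace_fromBlocks']
      _ = lam ^ j + ((A.toBlocks₂₂).charpoly.roots.map (· ^ j)).sum := by
          rw [htra, IH (A.toBlocks₂₂) j]
      _ = ((M.charpoly.roots).map (· ^ j)).sum := by
          rw [hch]
          conv_rhs => rw [hblock]
          rw [Matrix.charpoly_fromBlocks_zero₂₁, hcha, Polynomial.roots_mul hm,
            Polynomial.roots_X_sub_C]
          simp

end TracePow

section Key
open Matrix Polynomial MvPolynomial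

private lemma key_acf {P : ℕ → MvPolynomial ℕ ℚ} (hP : IsNewtonFamily P)
    {F : Type*} [Field F] [IsAlgClosed F] [Algebra ℚ F]
    {N i : ℕ} (h1 : 1 ≤ i) (h2 : i ≤ N) (M : Matrix (Fin N) (Fin N) F) :
    MvPolynomial.aeval (fun j => Matrix.trace (M ^ j)) (P i) = M.charpoly.coeff (N - i) := by
  have hsplit : M.charpoly.Splits := IsAlgClosed.splits _
  have hdeg : M.charpoly.natDegree = N := by
    rw [Matrix.charpoly_natDegree_eq_dim, Fintype.card_fin]
  have hcard : Multiset.card M.charpoly.roots = N := by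
    have := Polynomial.splits_iff_card_roots.mp hsplit
    omega
  have hL : (fun j : ℕ => Matrix.trace (M ^ j)) =
      fun j => ((M.charpoly.roots).map (· ^ j)).sum := by
    funext j; exact trace_pow_eq N M j
  rw [hL, newton_eval_multiset hP h1 _ (by omega)]
  rw [Polynomial.coeff_eq_esymm_roots_of_splits hsplit (by omega)]
  rw [(Matrix.charpoly_monic M).leadingCoeff, hdeg, one_mul]
  congr 2 <;> omega

private lemma key_gen {P : ℕ → MvPolynomial ℕ ℚ} (hP : IsNewtonFamily P)
    {B : Type*} [CommRing B] [Algebra ℚ B]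
    {ι : Type*} [Fintype ι] [DecidableEq ι] {i : ℕ} (h1 : 1 ≤ i) (h2 : i ≤ Fintype.card ι)
    (M : Matrix ι ι B) :
    MvPolynomial.aeval (fun j => Matrix.trace (M ^ j)) (P i) =
      M.charpoly.coeff (Fintype.card ι - i) := by
  classical
  set R := MvPolynomial (ι × ι) ℚ with hR
  let G : Matrix ι ι R := Matrix.of fun p q => MvPolynomial.X (p, q)
  have claim : MvPolynomial.aeval (fun j => Matrix.trace (G ^ j)) (P i) =
      G.charpoly.coeff (Fintype.card ι - i) := by
    letI : Algebra ℚ (AlgebraicClosure (FractionRing R)) :=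
      ((algebraMap (FractionRing R) (AlgebraicClosure (FractionRing R))).comp
        ((algebraMap R (FractionRing R)).comp (algebraMap ℚ R))).toAlgebra
    set F := AlgebraicClosure (FractionRing R) with hF
    let ψ : R →+* F := (algebraMap (FractionRing R) F).comp (algebraMap R (FractionRing R))
    have hinj : Function.Injective ψ :=
      (algebraMap (FractionRing R) F).injective.comp (IsFractionRing.injective R (FractionRing R))
    apply hinj
    rw [ringHom_aeval ψ (fun r => rfl)]
    let e : ι ≃ Fin (Fintype.card ι) := Fintype.equivFin ι
    have hpow : ∀ j : ℕ, (G.map ψ) ^ j = (G ^ j).map ψ := by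
      intro j
      have hh := map_pow (ψ.mapMatrix) G j
      simpa [RingHom.mapMatrix_apply] using hh.symm
    have hre : ∀ (X : Matrix ι ι F) (j : ℕ),
        (Matrix.reindex e e X) ^ j = Matrix.reindex e e (X ^ j) := by
      intro X j
      have hh := map_pow (Matrix.reindexAlgEquiv F F e) X j
      simpa [Matrix.reindexAlgEquiv_apply] using hh.symm
    have happ := key_acf hP h1 (by simpa using h2) (Matrix.reindex e e (G.map ψ))
    have hT : (fun j : ℕ => ψ (Matrix.trace (G ^ j))) =
        fun j => Matrix.trace ((Matrix.reindex e e (G.map ψ)) ^ j) := by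
      funext j
      rw [hre, trace_reindex', hpow, trace_matmap]
    rw [hT, happ, Matrix.charpoly_reindex, Matrix.charpoly_map, Polynomial.coeff_map]
  let φ : R →ₐ[ℚ] B := MvPolynomial.aeval (fun pq : ι × ι => M pq.1 pq.2)
  let φr : R →+* B := φ.toRingHom
  have hGM : G.map φr = M := by
    ext p q
    show φ (MvPolynomial.X (p, q)) = M p q
    rw [MvPolynomial.aeval_X]
  have hφpow : ∀ j : ℕ, (G ^ j).map φr = M ^ j := by
    intro j
    rw [← hGM]
    have hh := map_pow (φr.mapMatrix) G j
    simpa [RingHom.mapMatrix_apply] using hh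
  have hmain := congrArg φ claim
  rw [MvPolynomial.comp_aeval_apply (f := fun j : ℕ => Matrix.trace (G ^ j))] at hmain
  have hT2 : (fun j : ℕ => φ (Matrix.trace (G ^ j))) = fun j : ℕ => Matrix.trace (M ^ j) := by
    funext j
    calc φ (Matrix.trace (G ^ j)) = φr (Matrix.trace (G ^ j)) := rfl
      _ = Matrix.trace ((G ^ j).map φr) := (trace_matmap φr _).symm
      _ = Matrix.trace (M ^ j) := by rw [hφpow]
  rw [hT2] at hmain
  rw [hmain]
  have hc2 : φ (G.charpoly.coeff (Fintype.card ι - i)) =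
      ((G.charpoly).map φr).coeff (Fintype.card ι - i) := by
    rw [Polynomial.coeff_map]; rfl
  rw [hc2, ← Matrix.charpoly_map, hGM]

end Key


set_option maxHeartbeats 1000000 in
/-- If `R₁`, `R₂` embed trace-compatibly into `M_{n₁}(A₁)` and `M_{n₂}(A₂)`, then
`R₁ ⊗ R₂` with trace `t(r₁ ⊗ r₂) = t₁(r₁) · t₂(r₂)` embeds trace-compatibly via the
Kronecker product into `M_{n₁n₂}(A₁ ⊗ A₂)` and satisfies the `(n₁·n₂)`-th
Cayley–Hamilton identity. -/
theorem tensor_cayleyHamilton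
    (k : Type*) [Field k] [CharZero k]
    (R₁ R₂ : Type*) [Ring R₁] [Algebra k R₁] [Ring R₂] [Algebra k R₂]
    (A₁ A₂ : Type*) [CommRing A₁] [Algebra k A₁] [CommRing A₂] [Algebra k A₂]
    (n₁ n₂ : ℕ)
    (ι₁ : R₁ →ₐ[k] Matrix (Fin n₁) (Fin n₁) A₁) (hι₁ : Function.Injective ι₁)
    (ι₂ : R₂ →ₐ[k] Matrix (Fin n₂) (Fin n₂) A₂) (hι₂ : Function.Injective ι₂)
    (t₁ : R₁ →ₗ[k] k) (t₂ : R₂ →ₗ[k] k)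
    (hc₁ : ∀ x : R₁, Matrix.trace (ι₁ x) = algebraMap k A₁ (t₁ x))
    (hc₂ : ∀ x : R₂, Matrix.trace (ι₂ x) = algebraMap k A₂ (t₂ x))
    (P : ℕ → MvPolynomial ℕ ℚ) (hP : IsNewtonFamily P)
    (K : (R₁ ⊗[k] R₂) →ₐ[k]
      Matrix (Fin n₁ × Fin n₂) (Fin n₁ × Fin n₂) (A₁ ⊗[k] A₂))
    (hK : ∀ (r₁ : R₁) (r₂ : R₂),
      K (r₁ ⊗ₜ[k] r₂) = Matrix.kroneckerMap (· ⊗ₜ[k] ·) (ι₁ r₁) (ι₂ r₂)) :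
    Function.Injective K ∧
    (∀ x : R₁ ⊗[k] R₂,
      Matrix.trace (K x) =
        algebraMap k (A₁ ⊗[k] A₂)
          ((TensorProduct.lid k k) (TensorProduct.map t₁ t₂ x))) ∧
    (∀ x : R₁ ⊗[k] R₂,
      x ^ (n₁ * n₂) + ∑ i ∈ Finset.Icc 1 (n₁ * n₂),
        MvPolynomial.aeval
            (fun j => (TensorProduct.lid k k) (TensorProduct.map t₁ t₂ (x ^ j)))
            (P i) • x ^ (n₁ * n₂ - i) = 0) := by
  classical
  -- Part 2 : traces
  have htrace : ∀ x : R₁ ⊗[k] R₂,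
      Matrix.trace (K x) =
        algebraMap k (A₁ ⊗[k] A₂) ((TensorProduct.lid k k) (TensorProduct.map t₁ t₂ x)) := by
    intro x
    induction x using TensorProduct.induction_on with
    | zero => simp
    | tmul r₁ r₂ =>
      rw [hK]
      have lhs : Matrix.trace (Matrix.kroneckerMap (· ⊗ₜ[k] ·) (ι₁ r₁) (ι₂ r₂)) =
          Matrix.trace (ι₁ r₁) ⊗ₜ[k] Matrix.trace (ι₂ r₂) := by
        simp only [Matrix.trace, Matrix.diag, Matrix.kroneckerMap_apply]
        rw [Fintype.sum_prod_type]
        simp_rw [← TensorProduct.tmul_sum]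
        rw [← TensorProduct.sum_tmul]
      rw [lhs, hc₁, hc₂, TensorProduct.map_tmul, TensorProduct.lid_tmul, smul_eq_mul, map_mul]
      have h1 : algebraMap k A₁ (t₁ r₁) ⊗ₜ[k] algebraMap k A₂ (t₂ r₂) =
          (algebraMap k A₁ (t₁ r₁) ⊗ₜ[k] (1 : A₂)) * ((1 : A₁) ⊗ₜ[k] algebraMap k A₂ (t₂ r₂)) := by
        rw [Algebra.TensorProduct.tmul_mul_tmul, mul_one, one_mul]
      rw [h1, ← Algebra.TensorProduct.algebraMap_apply, ← Algebra.TensorProduct.algebraMap_apply']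
    | add y z hy hz =>
      simp only [map_add, Matrix.trace_add, hy, hz]
  -- Part 1 : injectivity
  have hKinj : Function.Injective K := by
    let κbil := Matrix.kroneckerMapBilinear (TensorProduct.mk k A₁ A₂)
      (l := Fin n₁) (m := Fin n₁) (n := Fin n₂) (p := Fin n₂)
    let κ : (Matrix (Fin n₁) (Fin n₁) A₁ ⊗[k] Matrix (Fin n₂) (Fin n₂) A₂) →ₗ[k]
        Matrix (Fin n₁ × Fin n₂) (Fin n₁ × Fin n₂) (A₁ ⊗[k] A₂) := TensorProduct.lift κbil
    let L : (R₁ ⊗[k] R₂) →ₗ[k]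
        (Matrix (Fin n₁) (Fin n₁) A₁ ⊗[k] Matrix (Fin n₂) (Fin n₂) A₂) :=
      TensorProduct.map ι₁.toLinearMap ι₂.toLinearMap
    have hκt : ∀ (X : Matrix (Fin n₁) (Fin n₁) A₁) (Y : Matrix (Fin n₂) (Fin n₂) A₂),
        κ (X ⊗ₜ[k] Y) = Matrix.kroneckerMap (· ⊗ₜ[k] ·) X Y := by
      intro X Y
      simp only [κ, TensorProduct.lift.tmul]
      rfl
    have hKL : ∀ z, K z = κ (L z) := by
      intro z
      induction z using TensorProduct.induction_on with
      | zero => simp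
      | tmul r₁ r₂ =>
        rw [hK]
        simp only [L, TensorProduct.map_tmul]
        rw [hκt]
        rfl
      | add y z hy hz => rw [map_add, map_add, map_add, hy, hz]
    have hLinj : Function.Injective L := by
      have heq : L = (LinearMap.rTensor (Matrix (Fin n₂) (Fin n₂) A₂) ι₁.toLinearMap).comp
          (LinearMap.lTensor R₁ ι₂.toLinearMap) := by
        apply TensorProduct.ext'
        intro a b
        simp [L]
      rw [heq]
      exact (Module.Flat.rTensor_preserves_injective_linearMap _ hι₁).comp
        (Module.Flat.lTensor_preserves_injective_linearMap _ hι₂)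
    have hκinj : Function.Injective κ := by
      let ψ : (Fin n₁ × Fin n₂) → (Fin n₁ × Fin n₂) → (A₁ ⊗[k] A₂) →ₗ[k]
          (Matrix (Fin n₁) (Fin n₁) A₁ ⊗[k] Matrix (Fin n₂) (Fin n₂) A₂) := fun p q =>
        TensorProduct.lift (LinearMap.mk₂ k
          (fun a b => Matrix.single p.1 q.1 a ⊗ₜ[k] Matrix.single p.2 q.2 b)
          (by intro a a' b; simp [Matrix.single_add, TensorProduct.add_tmul])
          (by intro c a b; simp [Matrix.smul_single, TensorProduct.smul_tmul'])
          (by intro a b b'; simp [Matrix.single_add, TensorProduct.tmul_add])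
          (by intro c a b
              show Matrix.single p.1 q.1 a ⊗ₜ[k] Matrix.single p.2 q.2 (c • b) =
                c • (Matrix.single p.1 q.1 a ⊗ₜ[k] Matrix.single p.2 q.2 b)
              rw [← Matrix.smul_single, TensorProduct.tmul_smul]))
      have hψ : ∀ p q a b, ψ p q (a ⊗ₜ[k] b) =
          Matrix.single p.1 q.1 a ⊗ₜ[k] Matrix.single p.2 q.2 b := by
        intro p q a b
        simp [ψ, TensorProduct.lift.tmul]
      have hrec : ∀ z, (∑ p : (Fin n₁ × Fin n₂) × (Fin n₁ × Fin n₂),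
          ψ p.1 p.2 ((κ z) p.1 p.2)) = z := by
        intro z
        induction z using TensorProduct.induction_on with
        | zero => simp
        | tmul X Y =>
          simp_rw [hκt X Y, Matrix.kroneckerMap_apply, Fintype.sum_prod_type, hψ]
          simp_rw [← TensorProduct.tmul_sum, ← TensorProduct.sum_tmul]
          simp_rw [← TensorProduct.tmul_sum, ← TensorProduct.sum_tmul]
          rw [← Matrix.matrix_eq_sum_single X, ← Matrix.matrix_eq_sum_single Y]
        | add y z hy hz =>
          rw [map_add]
          simp only [Matrix.add_apply, map_add]
          rw [Finset.sum_add_distrib, hy, hz]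
      intro z z' hzz
      have h1 := hrec z
      rw [hzz, hrec z'] at h1
      exact h1.symm
    intro u w huw
    apply hLinj
    apply hκinj
    rw [← hKL, ← hKL, huw]
  refine ⟨hKinj, htrace, ?_⟩
  -- Part 3 : Cayley-Hamilton
  intro x
  set N := n₁ * n₂ with hN
  apply hKinj
  rw [map_zero, map_add, map_pow, map_sum]
  rcases subsingleton_or_nontrivial (A₁ ⊗[k] A₂) with hsub | hnt
  · have hall : ∀ y z : Matrix (Fin n₁ × Fin n₂) (Fin n₁ × Fin n₂) (A₁ ⊗[k] A₂), y = z := by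
      intro y z
      ext i j
      exact Subsingleton.elim _ _
    exact hall _ _
  · set M := K x with hM
    have hcard : Fintype.card (Fin n₁ × Fin n₂) = N := by
      rw [Fintype.card_prod, Fintype.card_fin, Fintype.card_fin]
    have hcoeff : ∀ i ∈ Finset.Icc 1 N,
        K ((MvPolynomial.aeval
            (fun j => (TensorProduct.lid k k) (TensorProduct.map t₁ t₂ (x ^ j)))
            (P i)) • x ^ (N - i)) = M.charpoly.coeff (N - i) • M ^ (N - i) := by
      intro i hi
      rw [Finset.mem_Icc] at hi
      rw [map_smul, map_pow]
      set ci : k := MvPolynomial.aeval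
        (fun j => (TensorProduct.lid k k) (TensorProduct.map t₁ t₂ (x ^ j))) (P i) with hci
      rw [← algebraMap_smul (A₁ ⊗[k] A₂) ci (M ^ (N - i))]
      congr 1
      letI : Algebra ℚ (A₁ ⊗[k] A₂) :=
        ((algebraMap k (A₁ ⊗[k] A₂)).comp (algebraMap ℚ k)).toAlgebra
      rw [hci, ringHom_aeval (algebraMap k (A₁ ⊗[k] A₂)) (fun r => rfl)]
      have h8 : (fun j : ℕ => algebraMap k (A₁ ⊗[k] A₂)
          ((TensorProduct.lid k k) (TensorProduct.map t₁ t₂ (x ^ j)))) =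
          fun j : ℕ => Matrix.trace (M ^ j) := by
        funext j
        rw [← htrace (x ^ j), map_pow]
      rw [h8]
      have hkey := key_gen hP (B := A₁ ⊗[k] A₂) (ι := Fin n₁ × Fin n₂) hi.1
        (by omega) M
      rw [hkey, hcard]
    rw [Finset.sum_congr rfl hcoeff]
    have hCH := Matrix.aeval_self_charpoly M
    have hdeg : M.charpoly.natDegree = N := by
      rw [Matrix.charpoly_natDegree_eq_dim, hcard]
    rw [(Matrix.charpoly_monic M).as_sum, hdeg, map_add, map_pow, Polynomial.aeval_X,
      map_sum] at hCH
    have h9 : ∀ d ∈ Finset.range N,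
        (Polynomial.aeval M) (Polynomial.C (M.charpoly.coeff d) * Polynomial.X ^ d) =
          M.charpoly.coeff d • M ^ d := by
      intro d _
      rw [map_mul, Polynomial.aeval_C, map_pow, Polynomial.aeval_X, ← Algebra.smul_def]
    rw [Finset.sum_congr rfl h9] at hCH
    have h10 : ∑ i ∈ Finset.Icc 1 N, M.charpoly.coeff (N - i) • M ^ (N - i) =
        ∑ d ∈ Finset.range N, M.charpoly.coeff d • M ^ d := by
      apply Finset.sum_nbij' (i := fun i => N - i) (j := fun d => N - d)
      · intro a ha
        rw [Finset.mem_Icc] at ha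
        rw [Finset.mem_range]
        omega
      · intro a ha
        rw [Finset.mem_range] at ha
        rw [Finset.mem_Icc]
        omega
      · intro a ha
        rw [Finset.mem_Icc] at ha
        omega
      · intro a ha
        rw [Finset.mem_range] at ha
        omega
      · intro a ha
        rfl
    rw [h10]
    exact hCH
end

section
/- Let A be an integrally closed integral domain with fraction field F, R an A-algebra that is a finitely generated A-module, and S = R ⊗_A F a simple algebra. Then the reduced trace t_{S/F} maps R into A. -/
open scoped TensorProduct
open Polynomial

section Aux

lemma stdBasis_repr' {R : Type*} [CommRing R] {m n : Type*} [Fintype m] [Fintype n]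
    (x : Matrix m n R) (ij : m × n) :
    (Matrix.stdBasis R m n).repr x ij = x ij.1 ij.2 := by
  simp [Matrix.stdBasis, Pi.basis_repr, Pi.basisFun_repr, Matrix.ofLinearEquiv]

lemma trace_mulLeft_pi_matrix {Ω : Type*} [Field Ω] {p m : ℕ}
    (M : Fin p → Matrix (Fin m) (Fin m) Ω) :
    LinearMap.trace Ω _ (LinearMap.mulLeft Ω M) = m • ∑ i, (M i).trace := by
  classical
  let B := Pi.basis (fun _ : Fin p => Matrix.stdBasis Ω (Fin m) (Fin m))
  rw [LinearMap.trace_eq_matrix_trace Ω B, Matrix.trace]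
  have h : ∀ I : Σ _ : Fin p, Fin m × Fin m,
      (LinearMap.toMatrix B B (LinearMap.mulLeft Ω M)) I I = (M I.1) I.2.1 I.2.1 := by
    rintro ⟨i, j, k⟩
    rw [LinearMap.toMatrix_apply]
    rw [Pi.basis_repr]
    rw [Pi.basis_apply]
    rw [stdBasis_repr']
    simp [LinearMap.single, Matrix.stdBasis_eq_single, Matrix.mul_apply,
      Pi.single_apply, Matrix.single]
  simp only [Matrix.diag, h]
  rw [← Finset.univ_sigma_univ, Finset.sum_sigma]
  simp [Fintype.sum_prod_type, Finset.sum_const, Matrix.trace, Matrix.diag, Finset.smul_sum]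

lemma isIntegral_trace_of_isIntegral {A : Type*} [CommRing A] {Ω : Type*} [Field Ω] [Algebra A Ω]
    {m : ℕ} {M : Matrix (Fin m) (Fin m) Ω} (h : IsIntegral A M) :
    IsIntegral A M.trace := by
  classical
  let K := AlgebraicClosure Ω
  have hinj : Function.Injective (algebraMap Ω K) := (algebraMap Ω K).injective
  set N : Matrix (Fin m) (Fin m) K := M.map (algebraMap Ω K) with hNdef
  have hN : IsIntegral A N :=
    h.map ((AlgHom.mapMatrix (IsScalarTower.toAlgHom A Ω K)) :
      Matrix (Fin m) (Fin m) Ω →ₐ[A] Matrix (Fin m) (Fin m) K)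
  rw [← isIntegral_algebraMap_iff hinj]
  have htr : algebraMap Ω K M.trace = N.trace := by
    simp [Matrix.trace, Matrix.diag, map_sum, hNdef]
  rw [htr, Matrix.trace_eq_sum_roots_charpoly]
  refine IsIntegral.multiset_sum ?_
  intro μ hμ
  have hroot : N.charpoly.IsRoot μ := isRoot_of_mem_roots hμ
  have hdet : (Matrix.diagonal (fun _ : Fin m => μ) - N).det = 0 := by
    have h1 : eval μ N.charpoly = (N.charmatrix.map (eval μ)).det := by
      rw [Matrix.charpoly, ← Polynomial.coe_evalRingHom, RingHom.map_det, RingHom.mapMatrix_apply]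
    have h2 : N.charmatrix.map (eval μ) = Matrix.diagonal (fun _ : Fin m => μ) - N := by
      ext i j
      by_cases hij : i = j <;>
        simp [Matrix.charmatrix_apply, Matrix.map_apply, Matrix.diagonal_apply, hij]
    rw [← h2, ← h1]; exact hroot
  obtain ⟨v, hv0, hv⟩ := (Matrix.exists_mulVec_eq_zero_iff).mpr hdet
  have hNv : N.mulVec v = μ • v := by
    have := hv
    rw [Matrix.sub_mulVec, sub_eq_zero] at this
    rw [← this]
    funext i
    simp [Matrix.mulVec_diagonal]
  let f : Module.End K (Fin m → K) := Matrix.mulVecLin N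
  have hev : f.HasEigenvector μ v :=
    ⟨Module.End.mem_eigenspace_iff.mpr (by simpa [f, Matrix.mulVecLin] using hNv), hv0⟩
  obtain ⟨q, hqm, hq0⟩ := hN
  have hfa : Polynomial.aeval f (q.map (algebraMap A K)) = 0 := by
    have hf : f = (Matrix.toLinAlgEquiv'.toAlgHom :
        Matrix (Fin m) (Fin m) K →ₐ[K] Module.End K (Fin m → K)) N := rfl
    rw [hf, aeval_algHom_apply, aeval_map_algebraMap, aeval_def, hq0, map_zero]
  have heval : eval μ (q.map (algebraMap A K)) = 0 := by
    have h3 := Module.End.aeval_apply_of_hasEigenvector (p := q.map (algebraMap A K)) hev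
    rw [hfa] at h3
    have h4 : eval μ (q.map (algebraMap A K)) • v = 0 := by simpa using h3.symm
    rcases smul_eq_zero.mp h4 with h5 | h5
    · exact h5
    · exact absurd h5 hv0
  exact ⟨q, hqm, by rwa [eval₂_eq_eval_map]⟩

lemma mulLeft_baseChange {F : Type*} [CommRing F] {S : Type*} [Ring S] [Algebra F S]
    (Ω : Type*) [CommRing Ω] [Algebra F Ω] (s : S) :
    (LinearMap.mulLeft F s).baseChange Ω = LinearMap.mulLeft Ω ((1 : Ω) ⊗ₜ[F] s) := by
  apply LinearMap.restrictScalars_injective F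
  apply TensorProduct.ext'
  intro c x
  simp [Algebra.TensorProduct.tmul_mul_tmul]

end Aux

set_option maxHeartbeats 1000000 in
/-- Let `A` be an integrally closed domain with fraction field `F`, `R` an `A`-algebra
finitely generated as an `A`-module, and suppose `S = R ⊗_A F` is a simple algebra,
split by a field extension `Ω` of `F` as a product of matrix algebras of equal size.
Then the reduced trace (the sum of the matrix traces of the components) maps `R`
into `A`. -/
theorem reduced_trace_maps_into_base
    (A : Type*) [CommRing A] [IsDomain A] [IsIntegrallyClosed A]
    (F : Type*) [Field F] [Algebra A F] [IsFractionRing A F] [CharZero F]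
    (R : Type*) [Ring R] [Algebra A R] [Module.Finite A R]
    (Ω : Type*) [Field Ω] [Algebra F Ω] [Algebra A Ω] [IsScalarTower A F Ω]
    (m p : ℕ) (hm : 0 < m)
    [IsSimpleRing (F ⊗[A] R)]
    (e : (Ω ⊗[F] (F ⊗[A] R)) ≃ₐ[Ω] (Fin p → Matrix (Fin m) (Fin m) Ω)) :
    ∀ r : R, ∃ a : A,
      algebraMap A Ω a = ∑ i, Matrix.trace (e (1 ⊗ₜ[F] ((1 : F) ⊗ₜ[A] r)) i) := by
  intro r
  haveI : CharZero Ω := charZero_of_injective_algebraMap (algebraMap F Ω).injective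
  set S := F ⊗[A] R with hS
  set s : S := (1 : F) ⊗ₜ[A] r with hs
  set x : Ω ⊗[F] S := (1 : Ω) ⊗ₜ[F] s with hx
  set T : Ω := ∑ i, Matrix.trace (e x i) with hT
  set t : F := LinearMap.trace F S (LinearMap.mulLeft F s) with ht
  -- Step 1: base-change computes the trace over Ω
  have step2 : LinearMap.trace Ω _ (LinearMap.mulLeft Ω x) = algebraMap F Ω t := by
    rw [← mulLeft_baseChange Ω s, LinearMap.trace_baseChange]
  -- Step 2: conjugation by e preserves the trace
  have step3 : LinearMap.mulLeft Ω (e x) = (e.toLinearEquiv).conj (LinearMap.mulLeft Ω x) := by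
    ext y
    simp [LinearEquiv.conj_apply, map_mul]
  have step4 : LinearMap.trace Ω _ (LinearMap.mulLeft Ω (e x)) = algebraMap F Ω t := by
    rw [step3, LinearMap.trace_conj', step2]
  have key : algebraMap F Ω t = (m : Ω) * T := by
    rw [← step4, trace_mulLeft_pi_matrix, hT, nsmul_eq_mul]
  -- Integrality of T over A
  have hr : IsIntegral A r := IsIntegral.of_finite A r
  have hx' : IsIntegral A x := by
    have := hr.map
      ((((Algebra.TensorProduct.includeRight : S →ₐ[F] Ω ⊗[F] S).restrictScalars A).comp
        (Algebra.TensorProduct.includeRight : R →ₐ[A] S)) : R →ₐ[A] Ω ⊗[F] S)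
    exact this
  have hex : IsIntegral A (e x) := hx'.map (e.toAlgHom.restrictScalars A)
  have hTint : IsIntegral A T := by
    refine IsIntegral.sum _ fun i _ => ?_
    exact isIntegral_trace_of_isIntegral (hex.map ((Pi.evalAlgHom Ω _ i).restrictScalars A))
  -- descend to F
  have hmne : (m : Ω) ≠ 0 := Nat.cast_ne_zero.mpr hm.ne'
  set t' : F := (m : F)⁻¹ * t with ht'
  have htT : algebraMap F Ω t' = T := by
    rw [ht', map_mul, key, map_inv₀, map_natCast, ← mul_assoc, inv_mul_cancel₀ hmne, one_mul]
  have ht'int : IsIntegral A t' := by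
    rw [← isIntegral_algebraMap_iff (algebraMap F Ω).injective, htT]
    exact hTint
  obtain ⟨a, ha⟩ := IsIntegrallyClosed.isIntegral_iff.mp ht'int
  refine ⟨a, ?_⟩
  rw [IsScalarTower.algebraMap_apply A F Ω, ha, htT]
end
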